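/- For a, b ∈ ℂ, the two-dimensional subalgebras span{E₁₂, diag(a, a+1, −2a−1)} and span{E₁₂, diag(b, b+1, −2b−1)} of sl(3,ℂ) are SL(3,ℂ)-conjugate if and only if a = b. (Here diag(a, a+1, −2a−1) = a H_α + (2a+1) H_β, and each such span is a Lie subalgebra of sl(3,ℂ).) -/

import Mathlib

open Matrix

attribute [local instance 100] LieRing.ofAssociativeRing

noncomputable section

abbrev M3 : Type := Matrix (Fin 3) (Fin 3) ℂ

/-- The elementary matrix `E i j`. -/
def Eij (i j : Fin 3) : M3 := Matrix.single i j 1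

/-- `sl(3,ℂ)`, the set of traceless 3×3 complex matrices. -/
def sl3 : Set M3 := {X | Matrix.trace X = 0}

/-- `SL(3,ℂ) = {M : det M = 1}`. -/
def SL3 : Set M3 := {M | M.det = 1}

/-- Two subsets of `sl(3,ℂ)` are `SL(3,ℂ)`-conjugate if `M 𝔞 M⁻¹ = 𝔟` for some `M ∈ SL(3,ℂ)`. -/
def SLConj (a b : Set M3) : Prop :=
  ∃ M ∈ SL3, (fun X => M * X * M⁻¹) '' a = b

/-- `span{E₁₂, a H_α + (2a+1) H_β}` where `a H_α + (2a+1) H_β = diag(a, a+1, −2a−1)`. -/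
def Kset (a : ℂ) : Set M3 := {Eij 0 1, (Matrix.diagonal ![a, a + 1, -2 * a - 1] : M3)}

lemma brkt (c : ℂ) : ⁅Eij 0 1, (Matrix.diagonal ![c, c + 1, -2 * c - 1] : M3)⁆ = Eij 0 1 := by
  ext i j
  fin_cases i <;> fin_cases j <;>
    simp [Eij, Ring.lie_def, Matrix.mul_apply, Matrix.single, Matrix.diagonal,
      Fin.sum_univ_three]

lemma Esq : (Eij 0 1) * (Eij 0 1) = 0 := by
  ext i j
  fin_cases i <;> fin_cases j <;>
    simp [Eij, Matrix.mul_apply, Matrix.single, Fin.sum_univ_three]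

def asSub (c : ℂ) : LieSubalgebra ℂ M3 where
  toSubmodule := Submodule.span ℂ (Kset c)
  lie_mem' := by
    intro x y hx hy
    set u : M3 := Eij 0 1
    set v : M3 := Matrix.diagonal ![c, c + 1, -2 * c - 1]
    have hKs : Kset c = {u, v} := rfl
    rw [hKs] at hx hy ⊢
    obtain ⟨p, q, rfl⟩ := Submodule.mem_span_pair.mp hx
    obtain ⟨r, s, rfl⟩ := Submodule.mem_span_pair.mp hy
    have huv : ⁅u, v⁆ = u := brkt c
    have hvu : ⁅v, u⁆ = -u := by rw [← lie_skew, huv]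
    have key : ⁅p • u + q • v, r • u + s • v⁆ = (p * s - q * r) • u := by
      simp only [add_lie, lie_add, smul_lie, lie_smul, lie_self, smul_zero, huv, hvu,
        smul_neg, smul_smul, zero_add, add_zero, sub_smul]
      module
    rw [key]
    exact Submodule.smul_mem _ _ (Submodule.subset_span (by left; rfl))

lemma part1 (c : ℂ) :
    (LieSubalgebra.lieSpan ℂ M3 (Kset c) : Set M3) = (Submodule.span ℂ (Kset c) : Set M3) ∧
    (Submodule.span ℂ (Kset c) : Set M3) ⊆ sl3 := by
  constructor
  · have h1 : LieSubalgebra.lieSpan ℂ M3 (Kset c) = asSub c := by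
      apply le_antisymm
      · exact LieSubalgebra.lieSpan_le.mpr Submodule.subset_span
      · intro x hx
        exact Submodule.span_le.mpr (LieSubalgebra.subset_lieSpan) hx
    rw [h1]; rfl
  · have h : Submodule.span ℂ (Kset c) ≤ LinearMap.ker (Matrix.traceLinearMap (Fin 3) ℂ ℂ) := by
      apply Submodule.span_le.mpr
      rintro X (rfl | rfl)
      · show Matrix.trace (Eij 0 1) = 0
        simp [Eij, Matrix.trace, Matrix.diag, Matrix.single, Fin.sum_univ_three]
      · show Matrix.trace (Matrix.diagonal ![c, c + 1, -2 * c - 1] : M3) = 0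
        rw [Matrix.trace_diagonal, Fin.sum_univ_three]
        show c + (c + 1) + (-2 * c - 1) = 0
        ring
    intro X hX
    exact h hX

lemma fwd (a b : ℂ)
    (h : SLConj (Submodule.span ℂ (Kset a) : Set M3) (Submodule.span ℂ (Kset b) : Set M3)) :
    a = b := by
  obtain ⟨M, hdet, himg⟩ := h
  have hdet : M.det = 1 := hdet
  have hunit : IsUnit M.det := hdet ▸ isUnit_one
  have hMinv : M * M⁻¹ = 1 := Matrix.mul_nonsing_inv M hunit
  have hinvM : M⁻¹ * M = 1 := Matrix.nonsing_inv_mul M hunit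
  set E : M3 := Eij 0 1 with hEdef
  set Db : M3 := Matrix.diagonal ![b, b + 1, -2 * b - 1] with hDb
  set Da : M3 := Matrix.diagonal ![a, a + 1, -2 * a - 1] with hDa
  -- E conjugate lands in span Kb
  have hE_mem : M * E * M⁻¹ ∈ (Submodule.span ℂ (Kset b) : Set M3) := by
    rw [← himg]
    exact ⟨E, Submodule.subset_span (Or.inl rfl), rfl⟩
  obtain ⟨x', y', hE⟩ := Submodule.mem_span_pair.mp hE_mem
  -- square of the conjugate is zero
  have h2 : (M * E * M⁻¹) * (M * E * M⁻¹) = 0 := by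
    have e : (M * E * M⁻¹) * (M * E * M⁻¹) = M * (E * ((M⁻¹ * M) * (E * M⁻¹))) := by
      simp only [Matrix.mul_assoc]
    rw [e, hinvM, one_mul, ← Matrix.mul_assoc E E, Esq, Matrix.zero_mul, Matrix.mul_zero]
  have hsq : (x' • E + y' • Db) * (x' • E + y' • Db) = 0 := by rw [hE]; exact h2
  have h00 := congrFun (congrFun hsq 0) 0
  have h11 := congrFun (congrFun hsq 1) 1
  simp [hEdef, hDb, Eij, Matrix.mul_apply, Matrix.single, Matrix.diagonal,
    Fin.sum_univ_three] at h00 h11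
  have hy' : y' = 0 := by
    rcases h00 with h | h
    · exact h
    rcases h11 with h' | h'
    · exact h'
    exact absurd (by rw [h] at h'; simpa using h' : (1:ℂ) = 0) one_ne_zero
  rw [hy', zero_smul, add_zero] at hE
  -- x' ≠ 0
  have hx' : x' ≠ 0 := by
    intro hx0
    rw [hx0, zero_smul] at hE
    have hEz : M * E * M⁻¹ = 0 := hE.symm
    have h3 : M⁻¹ * (M * E * M⁻¹) * M = E := by
      have e : M⁻¹ * (M * E * M⁻¹) * M = (M⁻¹ * M) * E * (M⁻¹ * M) := by
        simp only [Matrix.mul_assoc]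
      rw [e, hinvM, one_mul, Matrix.mul_one]
    rw [hEz, Matrix.mul_zero, Matrix.zero_mul] at h3
    have := congrFun (congrFun h3 0) 1
    simp [hEdef, Eij, Matrix.single] at this
  -- M * E = x' • (E * M)
  have hE2 : M * E = x' • (E * M) := by
    have := congrArg (fun Z => Z * M) hE
    simp only [Matrix.smul_mul, Matrix.mul_assoc, hinvM, Matrix.mul_one] at this
    exact this.symm
  have e11 := congrFun (congrFun hE2 1) 1
  have e21 := congrFun (congrFun hE2 2) 1
  have e01 := congrFun (congrFun hE2 0) 1
  have e02 := congrFun (congrFun hE2 0) 2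
  simp [hEdef, Eij, Matrix.mul_apply, Matrix.single, Fin.sum_univ_three] at e11 e21 e01 e02
  have e12 : M 1 2 = 0 := e02.resolve_left hx'
  -- Db has a preimage in span Ka
  have hD_mem : Db ∈ (fun X => M * X * M⁻¹) '' (Submodule.span ℂ (Kset a) : Set M3) := by
    rw [himg]
    exact Submodule.subset_span (Or.inr rfl)
  obtain ⟨Y, hYmem, hYeq⟩ := hD_mem
  obtain ⟨x, y, rfl⟩ := Submodule.mem_span_pair.mp hYmem
  have hX : M * (x • E + y • Da) = Db * M := by
    have := congrArg (fun Z => Z * M) hYeq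
    simp only [Matrix.mul_assoc, hinvM, Matrix.mul_one] at this
    exact this
  have f00 := congrFun (congrFun hX 0) 0
  have f11 := congrFun (congrFun hX 1) 1
  simp [hEdef, hDa, hDb, Eij, Matrix.mul_apply, Matrix.single, Matrix.diagonal,
    Fin.sum_univ_three, e11] at f00 f11
  rw [Matrix.det_fin_three, e11, e21, e12] at hdet
  have hM00 : M 0 0 ≠ 0 := by
    intro h0
    rw [h0] at hdet
    simp at hdet
  have hM11 : M 1 1 ≠ 0 := by
    intro h0
    rw [h0] at hdet
    simp at hdet
  have eq1 : y * a = b := mul_left_cancel₀ hM00 (by linear_combination f00)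
  have eq2 : y * (a + 1) = b + 1 := mul_left_cancel₀ hM11 (by linear_combination f11)
  have hy : y = 1 := by linear_combination eq2 - eq1
  linear_combination eq1 - a * hy

theorem stmt_13 (a b : ℂ) :
    -- each such span is a Lie subalgebra of sl(3,ℂ)
    (∀ c : ℂ,
      (LieSubalgebra.lieSpan ℂ M3 (Kset c) : Set M3) = (Submodule.span ℂ (Kset c) : Set M3) ∧
      (Submodule.span ℂ (Kset c) : Set M3) ⊆ sl3) ∧
    -- conjugate iff a = b
    (SLConj (Submodule.span ℂ (Kset a) : Set M3) (Submodule.span ℂ (Kset b) : Set M3) ↔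
      a = b) := by
  refine ⟨part1, ⟨fwd a b, ?_⟩⟩
  rintro rfl
  refine ⟨1, ?_, ?_⟩
  · show (1 : M3).det = 1
    exact Matrix.det_one
  · have : (fun X : M3 => 1 * X * 1⁻¹) = id := by
      funext X
      simp [inv_one]
    rw [this, Set.image_id]
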